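/- Let φ be a metric-independent expansive (MIE) action of a group G on a metrizable topological space X, and let Y ⊆ X be a closed G-invariant subset. Then the restricted action of G on Y is metric-independent expansive. -/
import Mathlib


/-- An action `φ` is expansive with respect to a distance function `d`. -/
def ExpansiveWith {G X : Type*} (φ : G → X → X) (d : X → X → ℝ) : Prop :=
  ∃ c > 0, ∀ x y : X, x ≠ y → ∃ g : G, c < d (φ g x) (φ g y)

/-- Metric-independent expansiveness: expansive with respect to every metric
compatible with the topology. -/
def MIE {G X : Type*} [tX : TopologicalSpace X] (φ : G → X → X) : Prop :=
  ∀ m : MetricSpace X, m.toUniformSpace.toTopologicalSpace = tX →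
    ExpansiveWith φ (fun x y => @dist X m.toDist x y)



open Metric Topology

set_option linter.unusedSectionVars false

section MIEAux

variable {X : Type*} [mX : MetricSpace X] (Y : Set X) (m : MetricSpace Y)

/-- capped distance on `Y` coming from `m` -/
private def muD (a b : Y) : ℝ := min (@dist _ m.toDist a b) 1

private lemma muD_nonneg (a b : Y) : 0 ≤ muD Y m a b :=
  le_min (@dist_nonneg _ m.toPseudoMetricSpace a b) zero_le_one

private lemma muD_le_one (a b : Y) : muD Y m a b ≤ 1 := min_le_right _ _

private lemma muD_comm (a b : Y) : muD Y m a b = muD Y m b a := by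
  unfold muD; rw [@dist_comm _ m.toPseudoMetricSpace a b]

private lemma muD_self (a : Y) : muD Y m a a = 0 := by
  unfold muD; rw [@dist_self _ m.toPseudoMetricSpace a]; simp

private lemma min_one_add (p q : ℝ) (hp : 0 ≤ p) (hq : 0 ≤ q) :
    min (p + q) 1 ≤ min p 1 + min q 1 := by
  rcases le_total 1 p with h | h
  · rw [min_eq_right h]
    have : min (p+q) 1 ≤ 1 := min_le_right _ _
    have h2 : 0 ≤ min q 1 := le_min hq zero_le_one
    linarith
  · rcases le_total 1 q with h' | h'
    · rw [min_eq_right h']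
      have : min (p+q) 1 ≤ 1 := min_le_right _ _
      have h2 : 0 ≤ min p 1 := le_min hp zero_le_one
      linarith
    · rw [min_eq_left h, min_eq_left h']
      exact (min_le_left _ _).trans le_rfl

private lemma muD_triangle (a b c : Y) : muD Y m a c ≤ muD Y m a b + muD Y m b c := by
  have h1 : muD Y m a c ≤ min (@dist _ m.toDist a b + @dist _ m.toDist b c) 1 :=
    min_le_min (@dist_triangle _ m.toPseudoMetricSpace a b c) le_rfl
  exact h1.trans (min_one_add _ _ (@dist_nonneg _ m.toPseudoMetricSpace a b)
    (@dist_nonneg _ m.toPseudoMetricSpace b c))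

private lemma muD_abs_sub (a b w : Y) : |muD Y m a w - muD Y m b w| ≤ muD Y m a b := by
  rw [abs_sub_le_iff]
  constructor
  · have := muD_triangle Y m a b w; linarith
  · have := muD_triangle Y m b a w
    rw [muD_comm Y m b a] at this; linarith

private lemma muD_eq_zero {a b : Y} (h : muD Y m a b = 0) : a = b := by
  have : @dist _ m.toDist a b = 0 := by
    rcases min_eq_iff.mp h with ⟨h1, _⟩ | ⟨h1, _⟩
    · exact h1
    · norm_num at h1
  exact @eq_of_dist_eq_zero _ m a b this



open Classical in
private noncomputable def FD (z : X) (w : Y) : ℝ :=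
  if hz : z ∈ Y then muD Y m ⟨z, hz⟩ w
  else ⨅ a : Y, (muD Y m a w + min 2 ((dist z (a : X) - infDist z Y) / infDist z Y))

private noncomputable def ND (z z' : X) : ℝ := ⨆ w : Y, |FD Y m z w - FD Y m z' w|

private noncomputable def DD (z z' : X) : ℝ :=
  ND Y m z z' + min (min (dist z z') 1) (min (infDist z Y) 1 + min (infDist z' Y) 1)

variable [Nonempty Y]

private lemma FD_bddBelow (z : X) (w : Y) : BddBelow (Set.range fun a : Y =>
    muD Y m a w + min 2 ((dist z (a : X) - infDist z Y) / infDist z Y)) := by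
  refine ⟨-2, ?_⟩
  rintro r ⟨a, rfl⟩
  have h1 := muD_nonneg Y m a w
  have h2 : (-2 : ℝ) ≤ min 2 ((dist z (a : X) - infDist z Y) / infDist z Y) := by
    rcases le_total (2:ℝ) ((dist z (a : X) - infDist z Y) / infDist z Y) with h | h
    · rw [min_eq_left h]; norm_num
    · rw [min_eq_right h]
      rcases eq_or_ne (infDist z Y) 0 with h0 | h0
      · simp [h0]
      · have hpos : 0 < infDist z Y := lt_of_le_of_ne infDist_nonneg (Ne.symm h0)
        have : 0 ≤ (dist z (a : X) - infDist z Y) / infDist z Y := by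
          apply div_nonneg _ hpos.le
          have := infDist_le_dist_of_mem (x := z) a.2
          linarith
        linarith
  simp only; linarith

private lemma FD_nonneg (z : X) (w : Y) : 0 ≤ FD Y m z w := by
  unfold FD
  split_ifs with hz
  · exact muD_nonneg Y m _ w
  · refine le_ciInf fun a => ?_
    have h1 := muD_nonneg Y m a w
    have h2 : 0 ≤ (dist z (a : X) - infDist z Y) / infDist z Y := by
      apply div_nonneg _ infDist_nonneg
      have := infDist_le_dist_of_mem (x := z) a.2
      linarith
    have : 0 ≤ min 2 ((dist z (a : X) - infDist z Y) / infDist z Y) :=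
      le_min (by norm_num) h2
    linarith

private lemma FD_le_three (z : X) (w : Y) : FD Y m z w ≤ 3 := by
  unfold FD
  split_ifs with hz
  · exact (muD_le_one Y m _ w).trans (by norm_num)
  · obtain ⟨a⟩ := ‹Nonempty Y›
    refine (ciInf_le (FD_bddBelow Y m z w) a).trans ?_
    have h1 := muD_le_one Y m a w
    have h2 : min 2 ((dist z (a : X) - infDist z Y) / infDist z Y) ≤ 2 := min_le_left _ _
    linarith

private lemma ND_bddAbove (z z' : X) :
    BddAbove (Set.range fun w : Y => |FD Y m z w - FD Y m z' w|) := by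
  refine ⟨6, ?_⟩
  rintro r ⟨w, rfl⟩
  have h1 := FD_nonneg Y m z w
  have h2 := FD_nonneg Y m z' w
  have h3 := FD_le_three Y m z w
  have h4 := FD_le_three Y m z' w
  simp only
  rw [abs_le]; constructor <;> linarith

private lemma ND_nonneg (z z' : X) : 0 ≤ ND Y m z z' := by
  obtain ⟨w⟩ := ‹Nonempty Y›
  exact (abs_nonneg _).trans (le_ciSup (ND_bddAbove Y m z z') w)

private lemma abs_le_ND (z z' : X) (w : Y) : |FD Y m z w - FD Y m z' w| ≤ ND Y m z z' :=
  le_ciSup (ND_bddAbove Y m z z') w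

private lemma ND_self (z : X) : ND Y m z z = 0 := by
  unfold ND
  simp [ciSup_const]

private lemma ND_comm (z z' : X) : ND Y m z z' = ND Y m z' z := by
  unfold ND
  congr 1; funext w; rw [abs_sub_comm]

private lemma ND_triangle (x y z : X) : ND Y m x z ≤ ND Y m x y + ND Y m y z := by
  refine ciSup_le fun w => ?_
  have h1 := abs_le_ND Y m x y w
  have h2 := abs_le_ND Y m y z w
  have := abs_sub_le (FD Y m x w) (FD Y m y w) (FD Y m z w)
  linarith

private lemma FD_notmem' : True := trivial
private lemma FD_mem (z : X) (hz : z ∈ Y) (w : Y) : FD Y m z w = muD Y m ⟨z, hz⟩ w := by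
  unfold FD; rw [dif_pos hz]

private lemma ND_le_muD (a b : Y) : ND Y m (a : X) (b : X) ≤ muD Y m a b := by
  refine ciSup_le fun w => ?_
  rw [FD_mem Y m (a : X) a.2 w, FD_mem Y m (b : X) b.2 w]
  exact muD_abs_sub Y m a b w

private lemma lemA (hm : m.toUniformSpace.toTopologicalSpace = instTopologicalSpaceSubtype)
    (y₀ : Y) {ε : ℝ} (hε : 0 < ε) :
    ∃ ρ > 0, ∀ b : Y, dist (b : X) (y₀ : X) < ρ → muD Y m b y₀ < ε := by
  have hS : IsOpen[m.toUniformSpace.toTopologicalSpace]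
      (@Metric.ball Y m.toPseudoMetricSpace y₀ ε) :=
    @Metric.isOpen_ball Y m.toPseudoMetricSpace y₀ ε
  rw [hm] at hS
  obtain ⟨U, hU, hUeq⟩ := isOpen_induced_iff.mp hS
  have hy₀U : (y₀ : X) ∈ U := by
    have h := @Metric.mem_ball_self Y m.toPseudoMetricSpace y₀ ε hε
    rw [← hUeq] at h
    exact h
  obtain ⟨ρ, hρ, hball⟩ := Metric.isOpen_iff.mp hU (y₀ : X) hy₀U
  refine ⟨ρ, hρ, fun b hb => ?_⟩
  have hbU : (b : X) ∈ U := hball (Metric.mem_ball.mpr hb)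
  have hbS : b ∈ @Metric.ball Y m.toPseudoMetricSpace y₀ ε := by
    rw [← hUeq]; exact hbU
  exact lt_of_le_of_lt (min_le_left _ _) hbS

private lemma lemB (hm : m.toUniformSpace.toTopologicalSpace = instTopologicalSpaceSubtype)
    (y₀ : Y) {ε : ℝ} (hε : 0 < ε) :
    ∃ η > 0, η ≤ 1 ∧ ∀ b : Y, muD Y m b y₀ < η → dist (b : X) (y₀ : X) < ε := by
  have hS : IsOpen (Subtype.val ⁻¹' Metric.ball (y₀ : X) ε : Set Y) :=
    Metric.isOpen_ball.preimage continuous_subtype_val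
  rw [← hm] at hS
  obtain ⟨η, hη, hball⟩ := (@Metric.isOpen_iff Y m.toPseudoMetricSpace _).mp hS y₀
    (by exact Metric.mem_ball_self hε)
  refine ⟨min η 1, lt_min hη one_pos, min_le_right _ _, fun b hb => ?_⟩
  have hd : @dist _ m.toDist b y₀ < η := by
    by_contra hcon
    push_neg at hcon
    have : min η 1 ≤ muD Y m b y₀ := le_min (le_trans (min_le_left _ _) ?_) ?_
    · linarith
    · exact hcon
    · exact min_le_right _ _
  exact hball (show b ∈ @Metric.ball Y m.toPseudoMetricSpace y₀ η from hd)

private lemma ratio_lip {r δ ux uz rx rz : ℝ} (hr : 0 < r) (hδ : 0 ≤ δ)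
    (h0ux : 0 ≤ ux) (h0uz : 0 ≤ uz) (hrx : r/2 ≤ rx) (hrz : r/2 ≤ rz) (hrz2 : rz ≤ 2*r)
    (hux : ux ≤ uz + 2*δ) (hzx : rz - rx ≤ δ) :
    min 2 (ux/rx) ≤ min 2 (uz/rz) + 20*δ/r := by
  have hrxpos : 0 < rx := lt_of_lt_of_le (by linarith) hrx
  have hrzpos : 0 < rz := lt_of_lt_of_le (by linarith) hrz
  rcases le_total 2 (uz/rz) with h | h
  · rw [min_eq_left h]
    have h1 : min 2 (ux/rx) ≤ 2 := min_le_left _ _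
    have h2 : 0 ≤ 20*δ/r := by positivity
    linarith
  · rw [min_eq_right h]
    refine (min_le_right _ _).trans ?_
    have huz2 : uz ≤ 2*rz := by
      rw [div_le_iff₀ hrzpos] at h; linarith
    rw [div_add_div _ _ hrzpos.ne' hr.ne', div_le_div_iff₀ hrxpos (by positivity)]
    nlinarith [mul_nonneg (mul_nonneg h0uz hr.le) hδ, mul_nonneg hδ (mul_nonneg hrzpos.le hr.le),
      mul_le_mul_of_nonneg_right hux (mul_nonneg hrzpos.le hr.le),
      mul_le_mul_of_nonneg_left hzx (mul_nonneg h0uz hr.le),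
      mul_le_mul_of_nonneg_right huz2 (mul_nonneg hr.le hδ),
      mul_le_mul_of_nonneg_right hrx (mul_nonneg hδ hrzpos.le)]

private lemma ND_cont_mem (hm : m.toUniformSpace.toTopologicalSpace = instTopologicalSpaceSubtype)
    (hY : IsClosed Y) (x : X) (hx : x ∈ Y) {ε : ℝ} (hε : 0 < ε) :
    ∃ ρ > 0, ∀ z : X, dist x z < ρ → ND Y m x z ≤ ε/2 := by
  have hYne : Y.Nonempty := Set.nonempty_coe_sort.mp inferInstance
  obtain ⟨ρ₁, hρ₁, hA⟩ := lemA Y m hm ⟨x, hx⟩ (show (0:ℝ) < ε/4 by linarith)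
  refine ⟨ρ₁/4, by linarith, fun z hz => ?_⟩
  refine ciSup_le fun w => ?_
  rw [FD_mem Y m x hx w]
  by_cases hzY : z ∈ Y
  · rw [FD_mem Y m z hzY w]
    have h := muD_abs_sub Y m (⟨x,hx⟩ : Y) (⟨z,hzY⟩ : Y) w
    have h2 : muD Y m ⟨z,hzY⟩ ⟨x,hx⟩ < ε/4 := by
      refine hA ⟨z,hzY⟩ ?_
      show dist z x < ρ₁
      rw [dist_comm]; linarith
    rw [muD_comm Y m] at h2
    have := muD_nonneg Y m (⟨x,hx⟩ : Y) (⟨z,hzY⟩ : Y)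
    have h3 := h.trans h2.le
    linarith [abs_nonneg (muD Y m (⟨x,hx⟩:Y) w - muD Y m (⟨z,hzY⟩:Y) w), h3]
  · set r := infDist z Y with hrdef
    have hr0 : 0 ≤ r := infDist_nonneg
    have hrpos : 0 < r := (hY.notMem_iff_infDist_pos hYne).mp hzY
    have hrρ : r ≤ dist x z := by
      rw [dist_comm]; exact infDist_le_dist_of_mem hx
    have upper : FD Y m z w ≤ muD Y m ⟨x,hx⟩ w + ε/2 := by
      · set κ := min (ε/4 * r) r with hκdef
        have hκpos : 0 < κ := lt_min (by positivity) hrpos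
        obtain ⟨a, haY, hlt⟩ := (infDist_lt_iff hYne).mp
          (show infDist z Y < r + κ by rw [← hrdef]; linarith)
        unfold FD; rw [dif_neg hzY]
        refine (ciInf_le (FD_bddBelow Y m z w) ⟨a, haY⟩).trans ?_
        have t1 : min 2 ((dist z a - r)/r) ≤ ε/4 := by
          refine (min_le_right _ _).trans ?_
          rw [div_le_iff₀ hrpos]
          have : κ ≤ ε/4*r := min_le_left _ _
          linarith
        have t2 := muD_triangle Y m (⟨a,haY⟩ : Y) (⟨x,hx⟩ : Y) w
        have t3 : muD Y m ⟨a,haY⟩ ⟨x,hx⟩ < ε/4 := by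
          refine hA ⟨a,haY⟩ ?_
          show dist a x < ρ₁
          have hκr : κ ≤ r := min_le_right _ _
          calc dist a x ≤ dist a z + dist z x := dist_triangle a z x
            _ < (r + κ) + ρ₁/4 := by
                rw [dist_comm a z, dist_comm z x]; exact add_lt_add hlt (by linarith)
            _ ≤ ρ₁ := by
                have : r < ρ₁/4 := lt_of_le_of_lt hrρ hz
                linarith
        linarith
    have lower : muD Y m ⟨x,hx⟩ w - ε/2 ≤ FD Y m z w := by
      unfold FD; rw [dif_neg hzY]
      refine le_ciInf fun a => ?_
      have hra : r ≤ dist z (a:X) := infDist_le_dist_of_mem a.2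
      have hmin0 : 0 ≤ min 2 ((dist z (a:X) - r)/r) :=
        le_min (by norm_num) (div_nonneg (by linarith) hr0)
      rcases le_total (dist z (a:X)) (2*r) with hca | hca
      · have hdax : dist ((a:X)) x < ρ₁ := by
          calc dist (a:X) x ≤ dist (a:X) z + dist z x := dist_triangle _ z x
            _ < 2*r + ρ₁/4 := by
                rw [dist_comm (a:X) z, dist_comm z x]
                have : r < ρ₁/4 := lt_of_le_of_lt hrρ hz
                exact add_lt_add_of_le_of_lt hca hz
            _ ≤ ρ₁ := by
                have : r < ρ₁/4 := lt_of_le_of_lt hrρ hz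
                linarith
        have hmua := hA a hdax
        have htr := muD_triangle Y m (⟨x,hx⟩ : Y) a w
        rw [muD_comm Y m (⟨x,hx⟩ : Y) a] at htr
        linarith
      · have h1 : (1:ℝ) ≤ (dist z (a:X) - r)/r := by
          rw [le_div_iff₀ hrpos]; linarith
        have h2 : (1:ℝ) ≤ min 2 ((dist z (a:X) - r)/r) := le_min (by norm_num) h1
        have h3 := muD_le_one Y m (⟨x,hx⟩ : Y) w
        have h4 := muD_nonneg Y m a w
        linarith
    rw [abs_sub_le_iff]
    constructor <;> linarith

private lemma ND_cont_notmem (hY : IsClosed Y) (x : X) (hx : x ∉ Y) {ε : ℝ} (hε : 0 < ε) :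
    ∃ ρ > 0, ∀ z : X, dist x z < ρ → ND Y m x z ≤ ε/2 := by
  have hYne : Y.Nonempty := Set.nonempty_coe_sort.mp inferInstance
  set r := infDist x Y with hrdef
  have hr : 0 < r := (hY.notMem_iff_infDist_pos hYne).mp hx
  refine ⟨min (r/8) (ε*r/100), by positivity, fun z hz => ?_⟩
  have hδ1 : dist x z < r/8 := lt_of_lt_of_le hz (min_le_left _ _)
  have hδ2 : dist x z < ε*r/100 := lt_of_lt_of_le hz (min_le_right _ _)
  have hδ0 : 0 ≤ dist x z := dist_nonneg
  set rz := infDist z Y with hrzdef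
  have hxz1 : r ≤ rz + dist x z :=
    infDist_le_infDist_add_dist
  have hxz2 : rz ≤ r + dist x z := by
    have h := infDist_le_infDist_add_dist (x := z) (y := x) (s := Y)
    rw [dist_comm] at h
    exact h
  have hrz1 : r/2 ≤ rz := by linarith
  have hrz2 : rz ≤ 2*r := by linarith
  have hzY : z ∉ Y := by
    intro hzy
    rw [hrzdef] at hrz1
    rw [infDist_zero_of_mem hzy] at hrz1
    linarith
  refine ciSup_le fun w => ?_
  have key : ∀ (u v : X), u ∉ Y → v ∉ Y → r/2 ≤ infDist u Y → r/2 ≤ infDist v Y →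
      infDist v Y ≤ 2*r → FD Y m u w ≤ FD Y m v w + 20 * dist u v / r := by
    intro u v hu hv hru hrv hrv2
    have hd : ∀ a : Y, FD Y m u w ≤ muD Y m a w
        + min 2 ((dist v (a:X) - infDist v Y) / infDist v Y) + 20 * dist u v / r := by
      intro a
      unfold FD; rw [dif_neg hu]
      refine (ciInf_le (FD_bddBelow Y m u w) a).trans ?_
      have hlip : min 2 ((dist u (a:X) - infDist u Y) / infDist u Y) ≤
          min 2 ((dist v (a:X) - infDist v Y) / infDist v Y) + 20 * dist u v / r := by
        refine ratio_lip hr dist_nonneg ?_ ?_ hru hrv hrv2 ?_ ?_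
        · have := infDist_le_dist_of_mem (x := u) a.2; linarith
        · have := infDist_le_dist_of_mem (x := v) a.2; linarith
        · have h1 : dist u (a:X) ≤ dist v (a:X) + dist u v := by
            have := dist_triangle u v (a:X); linarith
          have h2 : infDist v Y ≤ infDist u Y + dist u v := by
            rw [dist_comm]; exact infDist_le_infDist_add_dist
          linarith
        · have : infDist v Y ≤ infDist u Y + dist u v := by
            rw [dist_comm]; exact infDist_le_infDist_add_dist
          linarith
      linarith
    have hFv : FD Y m v w = ⨅ a : Y, (muD Y m a w
        + min 2 ((dist v (a:X) - infDist v Y) / infDist v Y)) := by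
      unfold FD; rw [dif_neg hv]
    have : FD Y m u w - 20 * dist u v / r ≤ FD Y m v w := by
      rw [hFv]
      refine le_ciInf fun a => ?_
      have := hd a
      linarith
    linarith
  have hεd : 20 * dist x z / r ≤ ε/5 := by
    rw [div_le_iff₀ hr]
    linarith
  have hrx2 : r/2 ≤ infDist x Y := by rw [← hrdef]; linarith
  have hrxx2 : infDist x Y ≤ 2*r := by rw [← hrdef]; linarith
  have h1 : FD Y m x w ≤ FD Y m z w + ε/5 := by
    have := key x z hx hzY hrx2 hrz1 hrz2
    linarith
  have h2 : FD Y m z w ≤ FD Y m x w + ε/5 := by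
    have := key z x hzY hx hrz1 hrx2 hrxx2
    rw [dist_comm z x] at this
    linarith
  rw [abs_sub_le_iff]
  constructor <;> linarith

private noncomputable def ggb (z : X) : ℝ := min (infDist z Y) 1

private lemma ggb_nonneg (z : X) : 0 ≤ ggb Y z := le_min infDist_nonneg zero_le_one

private lemma ggb_mem {z : X} (hz : z ∈ Y) : ggb Y z = 0 := by
  unfold ggb; rw [infDist_zero_of_mem hz]; simp

private lemma DD_eq (z z' : X) : DD Y m z z' =
    ND Y m z z' + min (min (dist z z') 1) (ggb Y z + ggb Y z') := rfl

private lemma tD_triangle (x y z : X) :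
    min (min (dist x z) 1) (ggb Y x + ggb Y z) ≤
      min (min (dist x y) 1) (ggb Y x + ggb Y y)
      + min (min (dist y z) 1) (ggb Y y + ggb Y z) := by
  have hdb : min (dist x z) 1 ≤ min (dist x y) 1 + min (dist y z) 1 :=
    (min_le_min (dist_triangle x y z) le_rfl).trans
      (min_one_add _ _ dist_nonneg dist_nonneg)
  have hgl : ∀ u v : X, ggb Y u ≤ min (dist u v) 1 + ggb Y v := by
    intro u v
    have h1 : infDist u Y ≤ infDist v Y + dist u v := infDist_le_infDist_add_dist
    have h2 : ggb Y u ≤ min (dist u v + infDist v Y) 1 :=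
      min_le_min (by linarith) le_rfl
    exact h2.trans (min_one_add _ _ dist_nonneg infDist_nonneg)
  have g0x := ggb_nonneg Y x
  have g0y := ggb_nonneg Y y
  have g0z := ggb_nonneg Y z
  rcases le_total (min (dist x y) 1) (ggb Y x + ggb Y y) with h1 | h1 <;>
    rcases le_total (min (dist y z) 1) (ggb Y y + ggb Y z) with h2 | h2
  · rw [min_eq_left h1, min_eq_left h2]
    exact (min_le_left _ _).trans hdb
  · rw [min_eq_left h1, min_eq_right h2]
    have hxy := hgl x y
    linarith [min_le_right (min (dist x z) 1) (ggb Y x + ggb Y z)]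
  · rw [min_eq_right h1, min_eq_left h2]
    have hzy := hgl z y
    have hc : min (dist z y) 1 = min (dist y z) 1 := by rw [dist_comm]
    rw [hc] at hzy
    linarith [min_le_right (min (dist x z) 1) (ggb Y x + ggb Y z)]
  · rw [min_eq_right h1, min_eq_right h2]
    linarith [min_le_right (min (dist x z) 1) (ggb Y x + ggb Y z)]

private lemma DD_self (z : X) : DD Y m z z = 0 := by
  rw [DD_eq, ND_self]
  have : min (dist z z) 1 = 0 := by rw [dist_self]; simp
  rw [this]
  rw [min_eq_left (by linarith [ggb_nonneg Y z])]
  ring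

private lemma DD_comm (z z' : X) : DD Y m z z' = DD Y m z' z := by
  rw [DD_eq, DD_eq, ND_comm, dist_comm, add_comm (ggb Y z)]

private lemma DD_triangle (x y z : X) : DD Y m x z ≤ DD Y m x y + DD Y m y z := by
  rw [DD_eq, DD_eq, DD_eq]
  have := ND_triangle Y m x y z
  have := tD_triangle Y x y z
  linarith

private lemma DD_eq_zero (hY : IsClosed Y) (x z : X) (h : DD Y m x z = 0) : x = z := by
  rw [DD_eq] at h
  have hN := ND_nonneg Y m x z
  have ht : 0 ≤ min (min (dist x z) 1) (ggb Y x + ggb Y z) :=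
    le_min (le_min dist_nonneg zero_le_one) (by linarith [ggb_nonneg Y x, ggb_nonneg Y z])
  have hN0 : ND Y m x z = 0 := by linarith
  have ht0 : min (min (dist x z) 1) (ggb Y x + ggb Y z) = 0 := by linarith
  rcases min_eq_iff.mp ht0 with ⟨h1, _⟩ | ⟨h1, _⟩
  · rcases min_eq_iff.mp h1 with ⟨h2, _⟩ | ⟨h2, _⟩
    · exact eq_of_dist_eq_zero h2
    · norm_num at h2
  · have hgx : ggb Y x = 0 := le_antisymm (by linarith [ggb_nonneg Y z]) (ggb_nonneg Y x)
    have hgz : ggb Y z = 0 := le_antisymm (by linarith [ggb_nonneg Y x]) (ggb_nonneg Y z)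
    have hYne : Y.Nonempty := Set.nonempty_coe_sort.mp inferInstance
    have hxY : x ∈ Y := by
      by_contra hc
      have := (hY.notMem_iff_infDist_pos hYne).mp hc
      have : 0 < ggb Y x := lt_min this one_pos
      linarith
    have hzY : z ∈ Y := by
      by_contra hc
      have := (hY.notMem_iff_infDist_pos hYne).mp hc
      have : 0 < ggb Y z := lt_min this one_pos
      linarith
    have habs := abs_le_ND Y m x z ⟨z, hzY⟩
    rw [hN0, FD_mem Y m x hxY, FD_mem Y m z hzY, muD_self Y m] at habs
    have : muD Y m ⟨x, hxY⟩ ⟨z, hzY⟩ = 0 := by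
      have h0 := muD_nonneg Y m (⟨x,hxY⟩ : Y) (⟨z,hzY⟩ : Y)
      rw [sub_zero, abs_of_nonneg h0] at habs
      linarith
    have := muD_eq_zero Y m this
    exact congrArg Subtype.val this



private lemma DD_cont (hm : m.toUniformSpace.toTopologicalSpace = instTopologicalSpaceSubtype)
    (hY : IsClosed Y) (x : X) {ε : ℝ} (hε : 0 < ε) :
    ∃ ρ > 0, ∀ z : X, dist x z < ρ → DD Y m x z < ε := by
  have hN : ∃ ρ > 0, ∀ z : X, dist x z < ρ → ND Y m x z ≤ ε/2 := by
    by_cases hx : x ∈ Y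
    · exact ND_cont_mem Y m hm hY x hx hε
    · exact ND_cont_notmem Y m hY x hx hε
  obtain ⟨ρ₀, hρ₀, hN⟩ := hN
  refine ⟨min ρ₀ (ε/4), lt_min hρ₀ (by linarith), fun z hz => ?_⟩
  have h1 : ND Y m x z ≤ ε/2 := hN z (lt_of_lt_of_le hz (min_le_left _ _))
  have h2 : min (min (dist x z) 1) (ggb Y x + ggb Y z) ≤ dist x z :=
    (min_le_left _ _).trans (min_le_left _ _)
  have h3 : dist x z < ε/4 := lt_of_lt_of_le hz (min_le_right _ _)
  rw [DD_eq]
  linarith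

private lemma DD_open (hm : m.toUniformSpace.toTopologicalSpace = instTopologicalSpaceSubtype)
    (hY : IsClosed Y) (x : X) {ε : ℝ} (hε : 0 < ε) :
    ∃ δ > 0, ∀ z : X, DD Y m x z < δ → dist x z < ε := by
  have hYne : Y.Nonempty := Set.nonempty_coe_sort.mp inferInstance
  set ε' := min ε 1 with hε'def
  have hε'pos : 0 < ε' := lt_min hε one_pos
  have hε'le1 : ε' ≤ 1 := min_le_right _ _
  have hε'leε : ε' ≤ ε := min_le_left _ _
  by_cases hx : x ∈ Y
  · obtain ⟨η, hη, hη1, hB⟩ := lemB Y m hm ⟨x, hx⟩ (show (0:ℝ) < ε'/2 by linarith)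
    set δ := min (η/2) (ε'/8) with hδdef
    have hδpos : 0 < δ := lt_min (by linarith) (by linarith)
    have hδη : δ ≤ η/2 := min_le_left _ _
    have hδε : δ ≤ ε'/8 := min_le_right _ _
    refine ⟨δ, hδpos, fun z hz => ?_⟩
    rw [DD_eq] at hz
    have hNn := ND_nonneg Y m x z
    have htn : 0 ≤ min (min (dist x z) 1) (ggb Y x + ggb Y z) :=
      le_min (le_min dist_nonneg zero_le_one) (by linarith [ggb_nonneg Y x, ggb_nonneg Y z])
    have hN : ND Y m x z < δ := by linarith
    have ht : min (min (dist x z) 1) (ggb Y x + ggb Y z) < δ := by linarith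
    rcases lt_or_ge (min (dist x z) 1) δ with hd | hd
    · rcases min_lt_iff.mp hd with h | h
      · linarith
      · linarith
    · have hgz : infDist z Y < δ := by
        have h2 : ggb Y x + ggb Y z < δ := by
          rcases min_lt_iff.mp ht with h | h
          · linarith
          · exact h
        rw [ggb_mem Y hx] at h2
        have : ggb Y z < δ := by linarith
        rcases min_lt_iff.mp this with h | h
        · exact h
        · linarith
      by_cases hzY : z ∈ Y
      · have habs := abs_le_ND Y m x z ⟨z, hzY⟩
        rw [FD_mem Y m x hx, FD_mem Y m z hzY, muD_self Y m, sub_zero,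
          abs_of_nonneg (muD_nonneg Y m _ _)] at habs
        have hmu : muD Y m ⟨z,hzY⟩ ⟨x,hx⟩ < η := by
          rw [muD_comm Y m]
          linarith
        have := hB ⟨z,hzY⟩ hmu
        rw [dist_comm] at this
        linarith
      · by_contra hcon
        push_neg at hcon
        have hεd : ε' ≤ dist x z := hε'leε.trans hcon
        have hrz : 0 < infDist z Y := (hY.notMem_iff_infDist_pos hYne).mp hzY
        have hFzlt : FD Y m z ⟨x,hx⟩ < δ := by
          have habs := abs_le_ND Y m x z ⟨x, hx⟩
          rw [FD_mem Y m x hx, muD_self Y m] at habs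
          rw [abs_sub_comm, sub_zero, abs_of_nonneg (FD_nonneg Y m z _)] at habs
          linarith
        have hFzge : η ≤ FD Y m z ⟨x,hx⟩ := by
          have hFz : FD Y m z ⟨x,hx⟩ = ⨅ a : Y, (muD Y m a ⟨x,hx⟩
              + min 2 ((dist z (a:X) - infDist z Y) / infDist z Y)) := by
            unfold FD; rw [dif_neg hzY]
          rw [hFz]
          refine le_ciInf fun a => ?_
          have hra : infDist z Y ≤ dist z (a:X) := infDist_le_dist_of_mem a.2
          rcases le_total (dist z (a:X)) (2 * infDist z Y) with hca | hca
          · have hdax : ε'/2 ≤ dist ((a:X)) x := by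
              have h1 : dist x z ≤ dist x (a:X) + dist (a:X) z := dist_triangle _ _ _
              have h2 : dist (a:X) z < 2*δ := by
                rw [dist_comm]; linarith
              rw [dist_comm (a:X) x]
              linarith
            have hmge : ¬ (muD Y m a ⟨x,hx⟩ < η) := by
              intro hcon2
              have := hB a hcon2
              linarith
            push_neg at hmge
            have hm2 : 0 ≤ min 2 ((dist z (a:X) - infDist z Y) / infDist z Y) :=
              le_min (by norm_num) (div_nonneg (by linarith) hrz.le)
            linarith
          · have h1 : (1:ℝ) ≤ (dist z (a:X) - infDist z Y) / infDist z Y := by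
              rw [le_div_iff₀ hrz]; linarith
            have h2 : (1:ℝ) ≤ min 2 ((dist z (a:X) - infDist z Y) / infDist z Y) :=
              le_min (by norm_num) h1
            have := muD_nonneg Y m a (⟨x,hx⟩ : Y)
            linarith
        linarith
  · have hgx : 0 < ggb Y x :=
      lt_min ((hY.notMem_iff_infDist_pos hYne).mp hx) one_pos
    refine ⟨min ε' (ggb Y x), lt_min hε'pos hgx, fun z hz => ?_⟩
    rw [DD_eq] at hz
    have hNn := ND_nonneg Y m x z
    have ht : min (min (dist x z) 1) (ggb Y x + ggb Y z) < min ε' (ggb Y x) := by linarith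
    have hgsum : min ε' (ggb Y x) ≤ ggb Y x + ggb Y z := by
      have := ggb_nonneg Y z
      have := min_le_right ε' (ggb Y x)
      linarith
    have hd : min (dist x z) 1 < min ε' (ggb Y x) := by
      rcases min_lt_iff.mp ht with h | h
      · exact h
      · linarith
    have hδε' : min ε' (ggb Y x) ≤ ε' := min_le_left _ _
    rcases min_lt_iff.mp hd with h | h
    · linarith
    · linarith

private lemma exists_dominated_metric
    (hm : m.toUniformSpace.toTopologicalSpace = instTopologicalSpaceSubtype)
    (hY : IsClosed Y) :
    ∃ D : MetricSpace X,
      D.toUniformSpace.toTopologicalSpace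
        = mX.toUniformSpace.toTopologicalSpace ∧
      ∀ a b : Y, @dist X D.toDist (a : X) (b : X) ≤ @dist _ m.toDist a b := by
  have H : ∀ s : Set X, IsOpen s ↔ ∀ x ∈ s, ∃ ε > 0, ∀ y, DD Y m x y < ε → y ∈ s := by
    intro s
    constructor
    · intro hs x hxs
      obtain ⟨ε₁, hε₁, hball⟩ := Metric.isOpen_iff.mp hs x hxs
      obtain ⟨δ, hδ, hop⟩ := DD_open Y m hm hY x hε₁
      exact ⟨δ, hδ, fun y hy => hball (by rw [Metric.mem_ball, dist_comm]; exact hop y hy)⟩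
    · intro h
      rw [Metric.isOpen_iff]
      intro x hxs
      obtain ⟨ε, hε, hDball⟩ := h x hxs
      obtain ⟨ρ, hρ, hcont⟩ := DD_cont Y m hm hY x hε
      refine ⟨ρ, hρ, fun y hy => hDball y (hcont y ?_)⟩
      rw [Metric.mem_ball, dist_comm] at hy
      exact hy
  refine ⟨MetricSpace.ofDistTopology (DD Y m) (DD_self Y m) (DD_comm Y m)
    (DD_triangle Y m) H (DD_eq_zero Y m hY), rfl, fun a b => ?_⟩
  show DD Y m (a : X) (b : X) ≤ @dist _ m.toDist a b
  rw [DD_eq, ggb_mem Y a.2, ggb_mem Y b.2]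
  have ht : min (min (dist (a:X) (b:X)) 1) (0 + 0) = 0 := by
    rw [add_zero]
    exact min_eq_right (le_min dist_nonneg zero_le_one)
  rw [ht, add_zero]
  have h1 := ND_le_muD Y m a b
  have h2 : muD Y m a b ≤ @dist _ m.toDist a b := min_le_left _ _
  linarith

end MIEAux

/-- If an action of a group `G` on a metrizable topological space `X` is
metric-independent expansive, then so is its restriction to any closed
`G`-invariant subset `Y` (with the subspace topology). -/
theorem mie_restrict_closed_invariant {G X : Type*} [Group G] [TopologicalSpace X]
    [TopologicalSpace.MetrizableSpace X]
    (φ : G → X → X) (hone : ∀ x : X, φ 1 x = x)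
    (hmul : ∀ (g h : G) (x : X), φ (g * h) x = φ g (φ h x))
    (Y : Set X) (hYclosed : IsClosed Y) (hYinv : ∀ g : G, ∀ y ∈ Y, φ g y ∈ Y)
    (hmie : MIE φ) :
    MIE (fun (g : G) (y : Y) => (⟨φ g y, hYinv g y y.2⟩ : Y)) := by
  intro m hm
  by_cases hne : Nonempty Y
  · letI dX : MetricSpace X := TopologicalSpace.metrizableSpaceMetric X
    obtain ⟨D, hDtop, hDle⟩ := exists_dominated_metric Y m hm hYclosed
    obtain ⟨c, hc, hsep⟩ := hmie D hDtop
    refine ⟨c, hc, fun x y hxy => ?_⟩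
    obtain ⟨g, hg⟩ := hsep (x : X) (y : X) (Subtype.coe_injective.ne hxy)
    refine ⟨g, lt_of_lt_of_le hg ?_⟩
    exact hDle ⟨φ g (x : X), hYinv g _ x.2⟩ ⟨φ g (y : X), hYinv g _ y.2⟩
  · exact ⟨1, one_pos, fun x y hxy => (hne ⟨x⟩).elim⟩
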